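/- arXiv:2204.00378 — 2 statements merged into one kernel-verified Lean document; each statement's English description precedes it below -/
import Mathlib

section
/- Let B be a 2×2 real symmetric positive definite matrix, β ∈ (0,1), δ₁, δ₂ ≥ 0, and J(B) = (1-β)(I - B⁻¹) + β(B - I), R(B) = δ₁(B - I) + δ₂(B² - B). Then the Frobenius inner product tr(R(B) J(B)) equals (1-β)δ₁ |B^{1/2} - B^{-1/2}|² + βδ₂ |B^{3/2} - B^{1/2}|² + (βδ₁ + (1-β)δ₂) |B - I|², and in particular is nonnegative. -/
/-! With `S := B^{1/2}` we have `B = S²` and `B⁻¹ = (S⁻¹)²`, so the claimed expansion of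
`R(B) J(B)` is an identity between Laurent polynomials in `S`, valid in the commutative subalgebra
generated by `S` and `S⁻¹`. Since `S - S⁻¹`, `S³ - S` and `S² - 1` are symmetric, the trace of
each of their squares is a squared Frobenius norm, and nonnegativity follows. -/

noncomputable def frobSq (A : Matrix (Fin 2) (Fin 2) ℝ) : ℝ :=
  ∑ i : Fin 2, ∑ j : Fin 2, (A i j)^2

noncomputable def Jmap (β : ℝ) (B : Matrix (Fin 2) (Fin 2) ℝ) : Matrix (Fin 2) (Fin 2) ℝ :=
  (1 - β) • (1 - B⁻¹) + β • (B - 1)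

noncomputable def Rmap (δ₁ δ₂ : ℝ) (X : Matrix (Fin 2) (Fin 2) ℝ) : Matrix (Fin 2) (Fin 2) ℝ :=
  δ₁ • (X - 1) + δ₂ • (X * X - X)

open Matrix

lemma frobSq_nonneg (A : Matrix (Fin 2) (Fin 2) ℝ) : 0 ≤ frobSq A :=
  Finset.sum_nonneg fun _ _ => Finset.sum_nonneg fun _ _ => sq_nonneg _

lemma frobSq_eq_trace_transpose_mul (A : Matrix (Fin 2) (Fin 2) ℝ) :
    frobSq A = (Aᵀ * A).trace := by
  simp only [frobSq, trace, diag, mul_apply, transpose_apply, sq]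
  exact Finset.sum_comm

lemma Matrix.IsSymm.frobSq_eq_trace_mul_self {A : Matrix (Fin 2) (Fin 2) ℝ} (hA : A.IsSymm) :
    frobSq A = (A * A).trace := by
  rw [frobSq_eq_trace_transpose_mul, hA.eq]

theorem Rmap_mul_Jmap_identity_of_mul_eq_one {A : Type*} [CommRing A] [Algebra ℝ A]
    (β δ₁ δ₂ : ℝ) {s t : A} (hst : s * t = 1) :
    (δ₁ • (s * s - 1) + δ₂ • (s * s * (s * s) - s * s)) *
        ((1 - β) • (1 - t * t) + β • (s * s - 1)) =
      ((1 - β) * δ₁) • ((s - t) * (s - t)) + (β * δ₂) • ((s * s * s - s) * (s * s * s - s)) +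
        (β * δ₁ + (1 - β) * δ₂) • ((s * s - 1) * (s * s - 1)) := by
  simp only [Algebra.smul_def, map_mul, map_add, map_sub, map_one]
  linear_combination -(1 - algebraMap ℝ A β) *
    (algebraMap ℝ A δ₁ * (s * t - 1) + algebraMap ℝ A δ₂ * (s * s - 1) * (s * t + 1)) * hst

open scoped IsMulCommutative in
theorem Rmap_mul_Jmap_mul_self (β δ₁ δ₂ : ℝ) {S : Matrix (Fin 2) (Fin 2) ℝ} (hS : IsUnit S.det) :
    Rmap δ₁ δ₂ (S * S) * Jmap β (S * S) =
      ((1 - β) * δ₁) • ((S - S⁻¹) * (S - S⁻¹)) + (β * δ₂) • ((S * S * S - S) * (S * S * S - S)) +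
        (β * δ₁ + (1 - β) * δ₂) • ((S * S - 1) * (S * S - 1)) := by
  have hcomm : ∀ x ∈ ({S, S⁻¹} : Set _), ∀ y ∈ ({S, S⁻¹} : Set _), x * y = y * x := by
    simp only [Set.mem_insert_iff, Set.mem_singleton_iff]
    rintro x (rfl | rfl) y (rfl | rfl) <;> simp [mul_nonsing_inv _ hS, nonsing_inv_mul _ hS]
  have := Algebra.isMulCommutative_adjoin ℝ hcomm
  let S' : Algebra.adjoin ℝ {S, S⁻¹} := ⟨S, Algebra.subset_adjoin (by simp)⟩
  let T' : Algebra.adjoin ℝ {S, S⁻¹} := ⟨S⁻¹, Algebra.subset_adjoin (by simp)⟩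
  have hST : S' * T' = 1 := Subtype.ext (mul_nonsing_inv _ hS)
  simpa [Rmap, Jmap, Matrix.mul_inv_rev] using
    congrArg Subtype.val (Rmap_mul_Jmap_identity_of_mul_eq_one β δ₁ δ₂ hST)

theorem stmt5_general (β δ₁ δ₂ : ℝ) (hβ : β ∈ Set.Ioo (0:ℝ) 1) (hδ₁ : 0 ≤ δ₁) (hδ₂ : 0 ≤ δ₂)
    (B sqrtB : Matrix (Fin 2) (Fin 2) ℝ)
    (hs : sqrtB.IsSymm) (hsp : sqrtB.PosDef) (hsq : sqrtB * sqrtB = B) :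
    (Rmap δ₁ δ₂ B * Jmap β B).trace =
      (1 - β) * δ₁ * frobSq (sqrtB - sqrtB⁻¹)
      + β * δ₂ * frobSq (B * sqrtB - sqrtB)
      + (β * δ₁ + (1 - β) * δ₂) * frobSq (B - 1) ∧
    0 ≤ (Rmap δ₁ δ₂ B * Jmap β B).trace := by
  subst hsq
  have hsquare : (sqrtB * sqrtB).IsSymm := by simpa [sq] using hs.pow 2
  have hcube : (sqrtB * sqrtB * sqrtB).IsSymm := by simpa [pow_three, mul_assoc] using hs.pow 3
  have hmain : (Rmap δ₁ δ₂ (sqrtB * sqrtB) * Jmap β (sqrtB * sqrtB)).trace =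
      (1 - β) * δ₁ * frobSq (sqrtB - sqrtB⁻¹)
      + β * δ₂ * frobSq (sqrtB * sqrtB * sqrtB - sqrtB)
      + (β * δ₁ + (1 - β) * δ₂) * frobSq (sqrtB * sqrtB - 1) := by
    rw [Rmap_mul_Jmap_mul_self β δ₁ δ₂ hsp.det_pos.ne'.isUnit,
      (hs.sub hs.inv).frobSq_eq_trace_mul_self, (hcube.sub hs).frobSq_eq_trace_mul_self,
      (hsquare.sub isSymm_one).frobSq_eq_trace_mul_self]
    simp only [trace_add, trace_smul, smul_eq_mul]
  refine ⟨hmain, hmain ▸ ?_⟩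
  have := frobSq_nonneg (sqrtB - sqrtB⁻¹)
  have := frobSq_nonneg (sqrtB * sqrtB * sqrtB - sqrtB)
  have := frobSq_nonneg (sqrtB * sqrtB - 1)
  have : 0 ≤ 1 - β := sub_nonneg.2 hβ.2.le
  have := hβ.1.le
  positivity

theorem stmt5 (β δ₁ δ₂ : ℝ) (hβ : β ∈ Set.Ioo (0:ℝ) 1) (hδ₁ : 0 ≤ δ₁) (hδ₂ : 0 ≤ δ₂)
    (B sqrtB : Matrix (Fin 2) (Fin 2) ℝ) (hsymm : B.IsSymm) (hpos : B.PosDef)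
    (hs : sqrtB.IsSymm) (hsp : sqrtB.PosDef) (hsq : sqrtB * sqrtB = B) :
    (Rmap δ₁ δ₂ B * Jmap β B).trace =
      (1 - β) * δ₁ * frobSq (sqrtB - sqrtB⁻¹)
      + β * δ₂ * frobSq (B * sqrtB - sqrtB)
      + (β * δ₁ + (1 - β) * δ₂) * frobSq (B - 1) ∧
    0 ≤ (Rmap δ₁ δ₂ B * Jmap β B).trace :=
  stmt5_general β δ₁ δ₂ hβ hδ₁ hδ₂ B sqrtB hs hsp hsq
end

section
/- For u ∈ H¹(𝕋²) (the 2-torus), the Ladyzhenskaya inequality holds: ‖u‖_{L⁴}² ≤ C ‖u‖_{L²} ‖u‖_{H¹} for an absolute constant C. -/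
/-!
A C¹ function `g` on `[0, 1]` is bounded by its mean plus the integral of `|g'|` (compare it with
its value at a minimum point); by periodicity this bounds `u(x, t)²` both by a function `G x` of
the column and by a function `F t` of the row, each of total integral at most
`∫ u² + 2 ∫ |u ∂u| ≤ ‖u‖₂² + 2 ‖u‖₂ ‖∇u‖₂` by Cauchy–Schwarz. Then `u⁴ = u² · u² ≤ G x · F t`,
and Fubini splits the integral of the right-hand side into the product of the two integrals.
-/

open MeasureTheory

/-- The fundamental domain of the torus 𝕋² = ℝ²/ℤ². -/
noncomputable def Q : Set (Fin 2 → ℝ) := Set.Icc 0 1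

/-- `u` is ℤ²-periodic, i.e. descends to the torus 𝕋². -/
def TorusPeriodic (u : (Fin 2 → ℝ) → ℝ) : Prop :=
  ∀ (x : Fin 2 → ℝ) (i : Fin 2), u (x + Pi.single i 1) = u x

open Set
open scoped Interval

theorem le_setIntegral_Icc_add_abs_deriv {g g' : ℝ → ℝ} (hg : ∀ s, HasDerivAt g (g' s) s)
    (hg' : Continuous g') {x : ℝ} (hx : x ∈ Icc (0:ℝ) 1) :
    g x ≤ ∫ s in Icc (0:ℝ) 1, (g s + |g' s|) := by
  have hgc : Continuous g := continuous_iff_continuousAt.2 fun s => (hg s).continuousAt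
  obtain ⟨s₀, hs₀, hmin⟩ :=
    isCompact_Icc.exists_isMinOn (nonempty_Icc.2 zero_le_one) hgc.continuousOn
  have hmean : g s₀ ≤ ∫ s in Icc (0:ℝ) 1, g s := by
    simpa using setIntegral_ge_of_const_le_real (μ := volume) measurableSet_Icc (by simp) hmin
      hgc.integrableOn_Icc
  have hvar : g x - g s₀ ≤ ∫ s in Icc (0:ℝ) 1, |g' s| := by
    rw [← intervalIntegral.integral_eq_sub_of_hasDerivAt (fun s _ => hg s)
      (hg'.intervalIntegrable _ _)]
    calc (∫ s in s₀..x, g' s) ≤ ‖∫ s in s₀..x, g' s‖ := le_abs_self _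
      _ ≤ ∫ s in Ι s₀ x, ‖g' s‖ := intervalIntegral.norm_integral_le_integral_norm_uIoc
      _ ≤ ∫ s in Icc (0:ℝ) 1, |g' s| :=
        setIntegral_mono_set hg'.abs.integrableOn_Icc (.of_forall fun _ => abs_nonneg _)
          (.of_forall (uIoc_subset_uIcc.trans (uIcc_subset_Icc hs₀ hx)))
  rw [integral_add hgc.integrableOn_Icc hg'.abs.integrableOn_Icc]
  linarith

theorem integral_abs_mul_le_sqrt_mul_sqrt {α : Type*} [MeasurableSpace α] {μ : Measure α}
    {f g : α → ℝ} (hf : MemLp f 2 μ) (hg : MemLp g 2 μ) :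
    ∫ a, |f a * g a| ∂μ ≤ √(∫ a, f a ^ 2 ∂μ) * √(∫ a, g a ^ 2 ∂μ) := by
  have h := integral_mul_norm_le_Lp_mul_Lq Real.HolderConjugate.two_two
    (by simpa using hf) (by simpa using hg)
  simpa only [Real.norm_eq_abs, ← abs_mul, Real.rpow_two, sq_abs, ← Real.sqrt_eq_rpow] using h

section NormedSpace

variable {E : Type*} [NormedAddCommGroup E] [NormedSpace ℝ E]

theorem sq_le_setIntegral_line {u : E → ℝ} (hu : ContDiff ℝ 1 u) {e : E}
    (hper : ∀ x, u (x + e) = u x) (a : E) (s : ℝ) :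
    u (a + s • e) ^ 2 ≤ ∫ r in Icc (0:ℝ) 1,
      (u (a + r • e) ^ 2 + 2 * |u (a + r • e) * fderiv ℝ u (a + r • e) e|) := by
  have hline : ∀ r : ℝ, HasDerivAt (fun r : ℝ => a + r • e) e r := fun r => by
    simpa using ((hasDerivAt_id r).smul_const e).const_add a
  have hg : ∀ r : ℝ, HasDerivAt (fun r : ℝ => u (a + r • e) ^ 2)
      (2 * u (a + r • e) * fderiv ℝ u (a + r • e) e) r := fun r => by
    have := ((hu.differentiable one_ne_zero _).hasFDerivAt.comp_hasDerivAt r (hline r)).fun_pow 2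
    simpa [mul_comm] using this
  have hg' : Continuous fun r : ℝ => 2 * u (a + r • e) * fderiv ℝ u (a + r • e) e := by
    have hγ : Continuous fun r : ℝ => a + r • e := by fun_prop
    exact (continuous_const.mul (hu.continuous.comp hγ)).mul
      ((hu.continuous_fderiv_apply one_ne_zero).comp (hγ.prodMk continuous_const))
  have hper' : Function.Periodic (fun r : ℝ => u (a + r • e) ^ 2) 1 := fun r => by
    simp only [add_smul, one_smul, ← add_assoc, hper]
  have hmod := le_setIntegral_Icc_add_abs_deriv hg hg'
    (Ico_subset_Icc_self (toIcoMod_mem_Ico' zero_lt_one s))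
  rw [show toIcoMod zero_lt_one 0 s = s - toIcoDiv zero_lt_one 0 s • (1:ℝ) from rfl,
    hper'.sub_zsmul_eq] at hmod
  simpa only [mul_assoc, abs_mul, abs_two] using hmod

variable [MeasurableSpace E] [OpensMeasurableSpace E]

theorem setIntegral_sq_add_abs_mul_fderiv_le {u : E → ℝ} (hu : ContDiff ℝ 1 u) {e : E}
    (he : ‖e‖ ≤ 1) {μ : Measure E} [IsFiniteMeasureOnCompacts μ] {K : Set E} (hK : IsCompact K) :
    ∫ x in K, (u x ^ 2 + 2 * |u x * fderiv ℝ u x e|) ∂μ ≤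
      ∫ x in K, u x ^ 2 ∂μ + 2 * √(∫ x in K, u x ^ 2 ∂μ) * √(∫ x in K, ‖fderiv ℝ u x‖ ^ 2 ∂μ) := by
  have hsq : ∀ {f : E → ℝ}, Continuous f → IntegrableOn (fun x => f x ^ 2) K μ := fun hf =>
    (hf.pow 2).continuousOn.integrableOn_compact hK
  have hL2 : ∀ {f : E → ℝ}, Continuous f → MemLp f 2 (μ.restrict K) := fun hf =>
    (memLp_two_iff_integrable_sq hf.aestronglyMeasurable).2 (hsq hf)
  have hDu : Continuous fun x => fderiv ℝ u x := hu.continuous_fderiv one_ne_zero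
  have hDue : Continuous fun x => fderiv ℝ u x e :=
    (hu.continuous_fderiv_apply one_ne_zero).comp (continuous_id.prodMk continuous_const)
  have hdir : ∫ x in K, (fderiv ℝ u x e) ^ 2 ∂μ ≤ ∫ x in K, ‖fderiv ℝ u x‖ ^ 2 ∂μ := by
    refine integral_mono (hsq hDue) (hsq hDu.norm) fun x => ?_
    rw [← sq_abs, ← Real.norm_eq_abs]
    gcongr
    exact (fderiv ℝ u x).le_opNorm_of_le he |>.trans_eq (mul_one _)
  have hcs := integral_abs_mul_le_sqrt_mul_sqrt (hL2 hu.continuous) (hL2 hDue)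
  rw [integral_add (hsq hu.continuous) ((hu.continuous.fun_mul hDue).abs.const_mul 2
    |>.continuousOn.integrableOn_compact hK), integral_const_mul, mul_assoc]
  gcongr
  exact hcs.trans (by gcongr)

end NormedSpace

theorem integral_sq_le_integral_mul_integral {α β : Type*} [MeasurableSpace α]
    [MeasurableSpace β] {μ : Measure α} {ν : Measure β} [SFinite μ] [SFinite ν] {f : α × β → ℝ}
    {G : α → ℝ} {F : β → ℝ} (hf : 0 ≤ f) (hG : ∀ x t, f (x, t) ≤ G x)
    (hF : ∀ x t, f (x, t) ≤ F t) (hGi : Integrable G μ) (hFi : Integrable F ν) :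
    ∫ p, f p ^ 2 ∂μ.prod ν ≤ (∫ x, G x ∂μ) * ∫ t, F t ∂ν := by
  rw [← integral_prod_mul]
  refine integral_mono_of_nonneg (.of_forall fun p => sq_nonneg _) (hGi.mul_prod hFi)
    (.of_forall fun ⟨x, t⟩ => ?_)
  show f (x, t) ^ 2 ≤ G x * F t
  rw [sq]
  exact mul_le_mul (hG x t) (hF x t) (hf _) ((hf _).trans (hG x t))

local notation "μ₀₁" => volume.restrict (Icc (0:ℝ) 1)

theorem setIntegral_Q_eq_integral_prod (h : (Fin 2 → ℝ) → ℝ) :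
    ∫ x in Q, h x = ∫ p, h ![p.1, p.2] ∂(μ₀₁).prod μ₀₁ := by
  have hpi : (Measure.pi fun _ : Fin 2 => μ₀₁) = volume.restrict Q := by
    rw [← Measure.restrict_pi_pi, Set.pi_univ_Icc, volume_pi]; rfl
  rw [← hpi, ← ((measurePreserving_finTwoArrow _).symm).integral_comp']
  rfl

theorem integrable_prod_Icc_of_continuous {h : ℝ × ℝ → ℝ} (hc : Continuous h) :
    Integrable h ((μ₀₁).prod μ₀₁) := by
  rw [Measure.prod_restrict, ← Measure.volume_eq_prod, Set.Icc_prod_Icc]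
  exact hc.integrableOn_Icc

theorem setIntegral_Q_pow_four_le {u : (Fin 2 → ℝ) → ℝ} (hu : ContDiff ℝ 1 u)
    (hper : TorusPeriodic u) :
    ∫ x in Q, u x ^ 4 ≤ ((∫ x in Q, u x ^ 2) +
      2 * √(∫ x in Q, u x ^ 2) * √(∫ x in Q, ‖fderiv ℝ u x‖ ^ 2)) ^ 2 := by
  set M := (∫ x in Q, u x ^ 2) + 2 * √(∫ x in Q, u x ^ 2) * √(∫ x in Q, ‖fderiv ℝ u x‖ ^ 2)
  set Φ : Fin 2 → (Fin 2 → ℝ) → ℝ :=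
    fun i y => u y ^ 2 + 2 * |u y * fderiv ℝ u y (Pi.single i 1)|
  have hΦQ : ∀ i, ∫ x in Q, Φ i x ≤ M := fun i =>
    setIntegral_sq_add_abs_mul_fderiv_le hu (by rw [Pi.norm_single, norm_one]) isCompact_Icc
  have hΦint : ∀ i, Integrable (fun p : ℝ × ℝ => Φ i ![p.1, p.2]) ((μ₀₁).prod μ₀₁) := fun i => by
    have hDu : Continuous fun y => fderiv ℝ u y (Pi.single i 1) :=
      (hu.continuous_fderiv_apply one_ne_zero).comp (continuous_id.prodMk continuous_const)
    refine integrable_prod_Icc_of_continuous (Continuous.comp (g := Φ i) ?_ (by fun_prop))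
    exact (hu.continuous.pow 2).add (continuous_const.mul (hu.continuous.mul hDu).abs)
  have hcol : ∀ x t : ℝ, u ![x, t] ^ 2 ≤ ∫ s in Icc (0:ℝ) 1, Φ 1 ![x, s] := fun x t => by
    have hv : ∀ s : ℝ, ![x, 0] + s • Pi.single 1 1 = ![x, s] := fun s => by
      ext i; fin_cases i <;> simp
    simpa only [hv] using sq_le_setIntegral_line hu (hper · 1) ![x, 0] t
  have hrow : ∀ x t : ℝ, u ![x, t] ^ 2 ≤ ∫ s in Icc (0:ℝ) 1, Φ 0 ![s, t] := fun x t => by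
    have hv : ∀ s : ℝ, ![0, t] + s • Pi.single 0 1 = ![s, t] := fun s => by
      ext i; fin_cases i <;> simp
    simpa only [hv] using sq_le_setIntegral_line hu (hper · 0) ![0, t] x
  calc ∫ x in Q, u x ^ 4
      = ∫ p, (u ![p.1, p.2] ^ 2) ^ 2 ∂(μ₀₁).prod μ₀₁ := by
        simp only [setIntegral_Q_eq_integral_prod, ← pow_mul]
    _ ≤ (∫ x in Icc (0:ℝ) 1, ∫ t in Icc (0:ℝ) 1, Φ 1 ![x, t]) *
          ∫ t in Icc (0:ℝ) 1, ∫ s in Icc (0:ℝ) 1, Φ 0 ![s, t] :=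
        integral_sq_le_integral_mul_integral (fun _ => sq_nonneg _) hcol hrow
          (hΦint 1).integral_prod_left (hΦint 0).integral_prod_right
    _ = (∫ x in Q, Φ 1 x) * ∫ x in Q, Φ 0 x := by
        rw [setIntegral_Q_eq_integral_prod, setIntegral_Q_eq_integral_prod,
          integral_prod _ (hΦint 1), integral_prod_symm _ (hΦint 0)]
    _ ≤ M ^ 2 := by
        have hΦ0 : ∀ i, 0 ≤ ∫ x in Q, Φ i x := fun i => integral_nonneg fun _ => by positivity
        rw [sq]
        exact mul_le_mul (hΦQ 1) (hΦQ 0) (hΦ0 0) ((hΦ0 1).trans (hΦQ 1))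

theorem add_two_mul_sqrt_mul_sqrt_le {A B : ℝ} (hA : 0 ≤ A) (hB : 0 ≤ B) :
    A + 2 * √A * √B ≤ 3 * √A * √(A + B) := by
  have hAB : √A ≤ √(A + B) := Real.sqrt_le_sqrt (by linarith)
  have hBA : √B ≤ √(A + B) := Real.sqrt_le_sqrt (by linarith)
  have := Real.mul_self_sqrt hA
  nlinarith [Real.sqrt_nonneg A]

theorem stmt13 :
    ∃ C > 0, ∀ u : (Fin 2 → ℝ) → ℝ, ContDiff ℝ 1 u → TorusPeriodic u →
      Real.sqrt (∫ x in Q, (u x)^4) ≤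
        C * Real.sqrt (∫ x in Q, (u x)^2) *
          Real.sqrt ((∫ x in Q, (u x)^2) + ∫ x in Q, ‖fderiv ℝ u x‖^2) := by
  refine ⟨3, by norm_num, fun u hu hper => ?_⟩
  have hA : 0 ≤ ∫ x in Q, u x ^ 2 := integral_nonneg fun _ => sq_nonneg _
  have hB : 0 ≤ ∫ x in Q, ‖fderiv ℝ u x‖ ^ 2 := integral_nonneg fun _ => sq_nonneg _
  refine (Real.sqrt_le_iff.2 ⟨by positivity, setIntegral_Q_pow_four_le hu hper⟩).trans ?_
  exact add_two_mul_sqrt_mul_sqrt_le hA hB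
end
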